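/- arXiv:1101.2416 — 5 statements merged into one kernel-verified Lean document; each statement's English description precedes it below -/
import Mathlib

section
/- The space of equivalence classes under the action of SE(2) (rotations and translations of the plane) of configurations of 3 labelled points in the plane that are not all coincident is homeomorphic to ℝ³ \ {0}. -/
/-- A configuration of points in the plane (identified with `ℂ`) is totally
coincidental if all points coincide. -/
def TotallyCoincidental {n : ℕ} (p : Fin n → ℂ) : Prop := ∀ i j, p i = p j

/-- Equivalence of configurations under the diagonal action of `SE(2)`:
`q` is obtained from `p` by a rotation (multiplication by a unit complex number)
followed by a translation. -/
def SE2Rel (n : ℕ) (p q : {p : Fin n → ℂ // ¬ TotallyCoincidental p}) : Prop :=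
  ∃ a b : ℂ, ‖a‖ = 1 ∧ ∀ i, q.1 i = a * p.1 i + b

/-!
Translating the first point to the origin identifies a configuration up to translation with its
pair of differences `(z, w) ∈ ℂ² \ {0}`, on which rotations act by multiplication with unit
complex numbers. The Hopf map `(z, w) ↦ (‖z‖² - ‖w‖², conj z * w) ∈ ℝ × ℂ ≅ ℝ³` has exactly these
circle orbits as fibres, vanishes only at `0`, and is proper because its euclidean norm is
`‖z‖² + ‖w‖²`; a proper surjection is a quotient map, so it descends to the homeomorphism.
-/

open Complex ComplexConjugate Filter Topology

theorem Topology.IsQuotientMap.nonempty_quot_homeomorph {X Y : Type*} [TopologicalSpace X]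
    [TopologicalSpace Y] {f : X → Y} (hf : IsQuotientMap f) {r : X → X → Prop}
    (hr : ∀ x y, r x y ↔ f x = f y) : Nonempty (Quot r ≃ₜ Y) := by
  obtain rfl : r = (Setoid.ker f).r := funext₂ fun x y => propext (hr x y)
  exact ⟨IsQuotientMap.homeomorph (f := ⟨f, hf.continuous⟩) hf⟩

lemma exists_conj_mul_eq {a b : ℝ} (ha : 0 ≤ a) (hb : 0 ≤ b) {u : ℂ} (hu : ‖u‖ ^ 2 = a * b) :
    ∃ z w : ℂ, ‖z‖ ^ 2 = a ∧ ‖w‖ ^ 2 = b ∧ conj z * w = u := by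
  rcases ha.eq_or_lt with rfl | ha
  · refine ⟨0, √b, by simp, ?_, ?_⟩
    · rw [norm_real, Real.norm_of_nonneg (Real.sqrt_nonneg b), Real.sq_sqrt hb]
    · have hu0 : u = 0 := by simpa using hu
      simp [hu0]
  · have hz : (√a : ℂ) ≠ 0 := ofReal_ne_zero.2 (Real.sqrt_pos.2 ha).ne'
    refine ⟨√a, u / √a, ?_, ?_, ?_⟩
    · rw [norm_real, Real.norm_of_nonneg (Real.sqrt_nonneg a), Real.sq_sqrt ha.le]
    · rw [norm_div, div_pow, hu, norm_real, Real.norm_of_nonneg (Real.sqrt_nonneg a),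
        Real.sq_sqrt ha.le, mul_div_cancel_left₀ b ha.ne']
    · rw [conj_ofReal, mul_div_cancel₀ u hz]

lemma exists_norm_eq_one_mul_eq {u u' : ℂ} (hu : u ≠ 0) (h : ‖u'‖ = ‖u‖) :
    ∃ a : ℂ, ‖a‖ = 1 ∧ u' = a * u :=
  ⟨u' / u, by rw [norm_div, h, div_self (norm_ne_zero_iff.2 hu)], (div_mul_cancel₀ u' hu).symm⟩

lemma conj_mul_self_of_norm_eq_one {a : ℂ} (ha : ‖a‖ = 1) : conj a * a = 1 := by
  rw [conj_mul', ha, ofReal_one, one_pow]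

noncomputable def hopf (zw : ℂ × ℂ) : Fin 3 → ℝ :=
  ![‖zw.1‖ ^ 2 - ‖zw.2‖ ^ 2, (conj zw.1 * zw.2).re, (conj zw.1 * zw.2).im]

lemma continuous_hopf : Continuous hopf := by
  unfold hopf; fun_prop

lemma hopf_eq_hopf_iff_components {zw zw' : ℂ × ℂ} : hopf zw = hopf zw' ↔
    ‖zw.1‖ ^ 2 - ‖zw.2‖ ^ 2 = ‖zw'.1‖ ^ 2 - ‖zw'.2‖ ^ 2 ∧
      conj zw.1 * zw.2 = conj zw'.1 * zw'.2 := by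
  simp [hopf, funext_iff, Fin.forall_fin_succ, Complex.ext_iff]

lemma norm_sq_add_norm_sq_sq (z w : ℂ) :
    (‖z‖ ^ 2 + ‖w‖ ^ 2) ^ 2 = (‖z‖ ^ 2 - ‖w‖ ^ 2) ^ 2 + 4 * ‖conj z * w‖ ^ 2 := by
  rw [norm_mul, norm_conj]; ring

lemma norm_sq_add_norm_sq_eq_of_hopf_eq {z w z' w' : ℂ} (h : hopf (z, w) = hopf (z', w')) :
    ‖z‖ ^ 2 + ‖w‖ ^ 2 = ‖z'‖ ^ 2 + ‖w'‖ ^ 2 := by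
  obtain ⟨ht, hu⟩ := hopf_eq_hopf_iff_components.1 h
  refine (pow_left_inj₀ (by positivity) (by positivity) two_ne_zero).1 ?_
  rw [norm_sq_add_norm_sq_sq, norm_sq_add_norm_sq_sq, ht, hu]

lemma hopf_eq_zero_iff {zw : ℂ × ℂ} : hopf zw = 0 ↔ zw = 0 := by
  have hopf_zero : hopf 0 = 0 := by simp [hopf]
  refine ⟨fun h => ?_, fun h => h ▸ hopf_zero⟩
  have hsum := norm_sq_add_norm_sq_eq_of_hopf_eq (z' := 0) (w' := 0) (h.trans hopf_zero.symm)
  obtain ⟨hz, hw⟩ := (add_eq_zero_iff_of_nonneg (sq_nonneg ‖zw.1‖) (sq_nonneg ‖zw.2‖)).1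
    (by simpa using hsum)
  exact Prod.ext (by simpa using hz) (by simpa using hw)

lemma hopf_eq_hopf_iff {zw zw' : ℂ × ℂ} (hzw : zw ≠ 0) :
    hopf zw = hopf zw' ↔ ∃ a : ℂ, ‖a‖ = 1 ∧ zw' = a • zw := by
  obtain ⟨z, w⟩ := zw
  obtain ⟨z', w'⟩ := zw'
  simp only [Prod.smul_mk, smul_eq_mul, Prod.mk.injEq]
  constructor
  · intro h
    obtain ⟨ht, hu⟩ := hopf_eq_hopf_iff_components.1 h
    have hsum := norm_sq_add_norm_sq_eq_of_hopf_eq h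
    have hz : ‖z'‖ = ‖z‖ :=
      (pow_left_inj₀ (norm_nonneg _) (norm_nonneg _) two_ne_zero).1 (by linarith)
    have hw : ‖w'‖ = ‖w‖ :=
      (pow_left_inj₀ (norm_nonneg _) (norm_nonneg _) two_ne_zero).1 (by linarith)
    by_cases hz0 : z = 0
    · have hw0 : w ≠ 0 := fun hw0 => hzw (by simp [hz0, hw0])
      obtain ⟨a, ha, rfl⟩ := exists_norm_eq_one_mul_eq hw0 hw
      exact ⟨a, ha, by simpa [hz0] using hz, rfl⟩
    · obtain ⟨a, ha, rfl⟩ := exists_norm_eq_one_mul_eq hz0 hz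
      refine ⟨a, ha, rfl, ?_⟩
      have hw' : conj a * w' = w := by
        refine mul_left_cancel₀ ((map_ne_zero conj).2 hz0) ?_
        rw [hu, map_mul]; ring
      rw [← hw', ← mul_assoc, mul_comm a, conj_mul_self_of_norm_eq_one ha, one_mul]
  · rintro ⟨a, ha, rfl, rfl⟩
    refine hopf_eq_hopf_iff_components.2 ⟨?_, ?_⟩
    · simp [ha]
    · show conj z * w = conj (a * z) * (a * w)
      rw [map_mul, ← one_mul (conj z * w), ← conj_mul_self_of_norm_eq_one ha]; ring

lemma hopf_surjective : Function.Surjective hopf := by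
  intro v
  set t := v 0
  set u : ℂ := ⟨v 1, v 2⟩
  set s := √(t ^ 2 + 4 * ‖u‖ ^ 2)
  have hs : s ^ 2 = t ^ 2 + 4 * ‖u‖ ^ 2 := Real.sq_sqrt (by positivity)
  have ht : |t| ≤ s := Real.abs_le_sqrt (by nlinarith)
  -- `s` is to be `‖z‖ ^ 2 + ‖w‖ ^ 2` and `t` is `‖z‖ ^ 2 - ‖w‖ ^ 2`.
  obtain ⟨z, w, hz, hw, hu⟩ := exists_conj_mul_eq (a := (s + t) / 2) (b := (s - t) / 2)
    (by linarith [neg_abs_le t]) (by linarith [le_abs_self t]) (by linear_combination -hs / 4)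
  refine ⟨(z, w), funext fun i => ?_⟩
  fin_cases i
  · show ‖z‖ ^ 2 - ‖w‖ ^ 2 = t
    rw [hz, hw]; ring
  · show (conj z * w).re = v 1
    rw [hu]
  · show (conj z * w).im = v 2
    rw [hu]

lemma norm_sq_div_three_le_norm_hopf (zw : ℂ × ℂ) : ‖zw‖ ^ 2 / 3 ≤ ‖hopf zw‖ := by
  obtain ⟨z, w⟩ := zw
  set N := ‖hopf (z, w)‖
  have hc (i : Fin 3) : hopf (z, w) i ^ 2 ≤ N ^ 2 := by
    have hi := norm_le_pi_norm (hopf (z, w)) i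
    rw [Real.norm_eq_abs] at hi
    exact sq_le_sq' (abs_le.1 hi).1 (abs_le.1 hi).2
  have hS : ‖z‖ ^ 2 + ‖w‖ ^ 2 ≤ 3 * N := by
    refine (pow_le_pow_iff_left₀ (by positivity) (by positivity) two_ne_zero).1 ?_
    have := norm_sq_add_norm_sq_sq z w
    rw [Complex.sq_norm (conj z * w), normSq_apply] at this
    have h0 : (‖z‖ ^ 2 - ‖w‖ ^ 2) ^ 2 ≤ N ^ 2 := hc 0
    have h1 : (conj z * w).re ^ 2 ≤ N ^ 2 := hc 1
    have h2 : (conj z * w).im ^ 2 ≤ N ^ 2 := hc 2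
    nlinarith
  have hmax : ‖(z, w)‖ ^ 2 ≤ ‖z‖ ^ 2 + ‖w‖ ^ 2 := by
    rw [Prod.norm_mk]
    rcases max_choice ‖z‖ ‖w‖ with h | h <;> rw [h] <;> nlinarith [sq_nonneg ‖z‖, sq_nonneg ‖w‖]
  linarith

lemma isProperMap_hopf : IsProperMap hopf := by
  rw [isProperMap_iff_tendsto_cocompact, ← Metric.cobounded_eq_cocompact,
    ← Metric.cobounded_eq_cocompact]
  refine ⟨continuous_hopf, tendsto_norm_atTop_iff_cobounded.1 ?_⟩
  exact tendsto_atTop_mono norm_sq_div_three_le_norm_hopf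
    (((tendsto_pow_atTop two_ne_zero).comp tendsto_norm_cobounded_atTop).atTop_div_const
      three_pos)

lemma isQuotientMap_hopf : IsQuotientMap hopf :=
  isProperMap_hopf.isClosedMap.isQuotientMap continuous_hopf hopf_surjective

def differences (p : Fin 3 → ℂ) : ℂ × ℂ := (p 1 - p 0, p 2 - p 0)

lemma totallyCoincidental_iff_differences_eq_zero (p : Fin 3 → ℂ) :
    TotallyCoincidental p ↔ differences p = 0 := by
  simp only [TotallyCoincidental, differences, Prod.mk_eq_zero, sub_eq_zero]
  refine ⟨fun h => ⟨h 1 0, h 2 0⟩, fun ⟨h1, h2⟩ i j => ?_⟩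
  fin_cases i <;> fin_cases j <;> simp [h1, h2]

lemma isQuotientMap_differences : IsQuotientMap differences :=
  IsQuotientMap.of_inverse (f := fun zw : ℂ × ℂ => ![0, zw.1, zw.2]) (by fun_prop)
    (by unfold differences; fun_prop) fun zw => by simp [differences]

lemma exists_rigid_motion_iff {p q : Fin 3 → ℂ} :
    (∃ a b : ℂ, ‖a‖ = 1 ∧ ∀ i, q i = a * p i + b) ↔
      ∃ a : ℂ, ‖a‖ = 1 ∧ differences q = a • differences p := by
  simp only [differences, Prod.smul_mk, smul_eq_mul, Prod.mk.injEq]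
  constructor
  · rintro ⟨a, b, ha, hq⟩
    exact ⟨a, ha, by rw [hq, hq]; ring, by rw [hq, hq]; ring⟩
  · rintro ⟨a, ha, h1, h2⟩
    refine ⟨a, q 0 - a * p 0, ha, fun i => ?_⟩
    fin_cases i
    · simp
    · show q 1 = a * p 1 + (q 0 - a * p 0)
      linear_combination h1
    · show q 2 = a * p 2 + (q 0 - a * p 0)
      linear_combination h2

lemma preimage_hopf_differences_ne_zero :
    hopf ∘ differences ⁻¹' {v | v ≠ 0} = {p | ¬TotallyCoincidental p} := by
  ext p
  simp [hopf_eq_zero_iff, totallyCoincidental_iff_differences_eq_zero]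

/-- The space `E³` of equivalence classes under `SE(2)` of non-totally-coincidental
configurations of 3 labelled points in the plane is homeomorphic to `ℝ³ \ {0}`. -/
theorem stmt_0 :
    Nonempty (Quot (SE2Rel 3) ≃ₜ {v : Fin 3 → ℝ // v ≠ 0}) := by
  have hq := ((isQuotientMap_hopf.comp isQuotientMap_differences).restrictPreimage_isOpen
    isOpen_ne).comp (Homeomorph.setCongr preimage_hopf_differences_ne_zero.symm).isQuotientMap
  refine hq.nonempty_quot_homeomorph fun p q => ?_
  rw [Subtype.ext_iff]
  have hp : differences p.1 ≠ 0 := (totallyCoincidental_iff_differences_eq_zero p.1).not.1 p.2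
  exact exists_rigid_motion_iff.trans (hopf_eq_hopf_iff hp).symm
end

section
/- The space of equivalence classes under SE(2) of configurations of n labelled points in the plane, not all coincident, is homeomorphic to ℂP(n−2) × (0,∞), where ℂP(k) denotes complex projective space of complex dimension k. -/
/-- The relation defining complex projective space `ℂP(k)` as the quotient of
`ℂ^{k+1} \ {0}` by multiplication by nonzero complex scalars. -/
def CProjRel (k : ℕ) (v w : {v : Fin (k + 1) → ℂ // v ≠ 0}) : Prop :=
  ∃ c : ℂ, c ≠ 0 ∧ w.1 = c • v.1

/-!
Subtracting the first point kills translations, after which a rotation by `a` multiplies the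
difference vector `(p₁ - p₀, …, pₙ₋₁ - p₀) ∈ ℂⁿ⁻¹ \ {0}` by the unit scalar `a`. Since a nonzero
complex scalar is a unit scalar times a positive real, the `SE(2)`-class of a configuration is
recorded exactly by the complex line of its difference vector together with the norm of that
vector, and `([w], r) ↦ [(0, r w / ‖w‖)]` inverts this. The inverse is continuous because the
projection `ℂⁿ⁻¹ \ {0} → ℂP(n-2)` is an open quotient map, so it stays a quotient map after taking
a product with `(0, ∞)`.
-/

namespace PlanarConfiguration

noncomputable section

section DiffFromFirst

variable {α : Type*} {m : ℕ}

def diffFromFirst [Sub α] (p : Fin (m + 1) → α) : Fin m → α := fun i => p i.succ - p 0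

@[simp]
lemma diffFromFirst_cons_zero [SubNegZeroMonoid α] (v : Fin m → α) :
    diffFromFirst (Fin.cons 0 v : Fin (m + 1) → α) = v := by
  funext i
  simp [diffFromFirst]

lemma cons_zero_diffFromFirst [AddGroup α] (p : Fin (m + 1) → α) (i : Fin (m + 1)) :
    (Fin.cons 0 (diffFromFirst p) : Fin (m + 1) → α) i = p i - p 0 := by
  cases i using Fin.cases <;> simp [diffFromFirst]

lemma diffFromFirst_affine [Ring α] (a b : α) (p : Fin (m + 1) → α) :
    diffFromFirst (fun i => a * p i + b) = a • diffFromFirst p := by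
  funext i
  simp only [diffFromFirst, Pi.smul_apply, smul_eq_mul]
  noncomm_ring

lemma continuous_diffFromFirst [TopologicalSpace α] [Sub α] [ContinuousSub α] :
    Continuous (diffFromFirst : (Fin (m + 1) → α) → Fin m → α) :=
  continuous_pi fun _ => (continuous_apply _).sub (continuous_apply _)

lemma diffFromFirst_eq_zero_iff {p : Fin (m + 1) → ℂ} :
    diffFromFirst p = 0 ↔ TotallyCoincidental p := by
  constructor
  · intro h
    have h0 : ∀ i, p i = p 0 := fun i => by
      cases i using Fin.cases with
      | zero => rfl
      | succ i => exact sub_eq_zero.mp (congrFun h i)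
    exact fun i j => (h0 i).trans (h0 j).symm
  · intro h
    funext i
    simp [diffFromFirst, h i.succ 0]

end DiffFromFirst

section Rescale

variable {E : Type*} [NormedAddCommGroup E] [NormedSpace ℂ E]

def rescale (r : ℝ) (w : E) : E := ((r / ‖w‖ : ℝ) : ℂ) • w

lemma norm_rescale {r : ℝ} (hr : 0 ≤ r) {w : E} (hw : w ≠ 0) : ‖rescale r w‖ = r := by
  have hw' : 0 < ‖w‖ := norm_pos_iff.mpr hw
  rw [rescale, norm_smul, Complex.norm_real, Real.norm_of_nonneg (by positivity),
    div_mul_cancel₀ _ hw'.ne']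

lemma rescale_ne_zero {r : ℝ} (hr : 0 < r) {w : E} (hw : w ≠ 0) : rescale r w ≠ 0 :=
  norm_ne_zero_iff.mp ((norm_rescale hr.le hw).trans_ne hr.ne')

lemma rescale_norm_self (w : E) : rescale ‖w‖ w = w := by
  rcases eq_or_ne w 0 with rfl | hw
  · simp [rescale]
  · rw [rescale, div_self (norm_ne_zero_iff.mpr hw), Complex.ofReal_one, one_smul]

lemma rescale_smul (r : ℝ) {c : ℂ} (hc : c ≠ 0) (w : E) :
    rescale r (c • w) = (c / ‖c‖) • rescale r w := by
  simp only [rescale, norm_smul, smul_smul]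
  congr 1
  push_cast
  field_simp

lemma continuousOn_rescale : ContinuousOn (fun x : ℝ × E => rescale x.1 x.2) {x | x.2 ≠ 0} :=
  ((Complex.continuous_ofReal.comp_continuousOn
    (continuous_fst.continuousOn.div continuous_snd.norm.continuousOn
      fun _ hx => norm_ne_zero_iff.mpr hx))).smul continuous_snd.continuousOn

end Rescale

section ScalarQuotient

variable {𝕜 E : Type*} [DivisionRing 𝕜] [AddCommGroup E] [Module 𝕜 E] [TopologicalSpace E]
  [ContinuousConstSMul 𝕜 E]

theorem isOpenQuotientMap_quot_mk_smul :
    IsOpenQuotientMap (Quot.mk fun v w : {v : E // v ≠ 0} => ∃ c : 𝕜, c ≠ 0 ∧ w.1 = c • v.1) := by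
  set r := fun v w : {v : E // v ≠ 0} => ∃ c : 𝕜, c ≠ 0 ∧ w.1 = c • v.1
  have hr : Equivalence r :=
    { refl := fun v => ⟨1, one_ne_zero, (one_smul _ _).symm⟩
      symm := fun ⟨c, hc, h⟩ =>
        ⟨c⁻¹, inv_ne_zero hc, by rw [h, smul_smul, inv_mul_cancel₀ hc, one_smul]⟩
      trans := fun ⟨c, hc, h⟩ ⟨d, hd, h'⟩ => ⟨d * c, mul_ne_zero hd hc, by rw [h', h, smul_smul]⟩ }
  let act (c : 𝕜ˣ) (v : {v : E // v ≠ 0}) : {v : E // v ≠ 0} :=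
    ⟨(c : 𝕜) • v.1, smul_ne_zero c.ne_zero v.2⟩
  refine ⟨Quot.exists_rep, continuous_quot_mk, fun U hU => ?_⟩
  have hpre : Quot.mk r ⁻¹' (Quot.mk r '' U) = ⋃ c : 𝕜ˣ, act c ⁻¹' U := by
    ext v
    simp only [Set.mem_preimage, Set.mem_image, Set.mem_iUnion]
    constructor
    · rintro ⟨u, hu, huv⟩
      obtain ⟨c, hc, hcv⟩ := hr.symm (hr.eqvGen_iff.mp (Quot.eqvGen_exact huv))
      exact ⟨Units.mk0 c hc, by convert hu using 1; exact Subtype.ext hcv.symm⟩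
    · rintro ⟨c, hc⟩
      exact ⟨act c v, hc, Quot.sound (hr.symm ⟨c, c.ne_zero, rfl⟩)⟩
  rw [← isQuotientMap_quot_mk.isOpen_preimage, hpre]
  exact isOpen_iUnion fun c => hU.preimage ((continuous_subtype_val.const_smul _).subtype_mk _)

end ScalarQuotient

section ShapeSize

variable {m : ℕ}

-- `‖·‖` is the sup norm on `Fin (m + 1) → ℂ`; any norm would serve as the size coordinate.
def toShapeSize (p : {p : Fin (m + 2) → ℂ // ¬ TotallyCoincidental p}) :
    Quot (CProjRel m) × {r : ℝ // 0 < r} :=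
  have hp : diffFromFirst p.1 ≠ 0 := diffFromFirst_eq_zero_iff.not.mpr p.2
  (Quot.mk _ ⟨diffFromFirst p.1, hp⟩, ⟨‖diffFromFirst p.1‖, norm_pos_iff.mpr hp⟩)

def ofShapeSize (x : {v : Fin (m + 1) → ℂ // v ≠ 0} × {r : ℝ // 0 < r}) :
    {p : Fin (m + 2) → ℂ // ¬ TotallyCoincidental p} :=
  ⟨Fin.cons 0 (rescale x.2.1 x.1.1), fun h => rescale_ne_zero x.2.2 x.1.2 <| by
    simpa using diffFromFirst_eq_zero_iff.mpr h⟩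

lemma toShapeSize_eq_of_se2Rel {p q : {p : Fin (m + 2) → ℂ // ¬ TotallyCoincidental p}}
    (h : SE2Rel (m + 2) p q) : toShapeSize p = toShapeSize q := by
  obtain ⟨a, b, ha, hq⟩ := h
  have hd : diffFromFirst q.1 = a • diffFromFirst p.1 := by
    rw [← diffFromFirst_affine, funext hq]
  refine Prod.ext (Quot.sound ⟨a, norm_ne_zero_iff.mp (ha.trans_ne one_ne_zero), hd⟩)
    (Subtype.ext ?_)
  simp only [toShapeSize, hd, norm_smul, ha, one_mul]

lemma se2Rel_ofShapeSize {w w' : {v : Fin (m + 1) → ℂ // v ≠ 0}} (h : CProjRel m w w')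
    (r : {r : ℝ // 0 < r}) : SE2Rel (m + 2) (ofShapeSize (w, r)) (ofShapeSize (w', r)) := by
  obtain ⟨c, hc, hw'⟩ := h
  refine ⟨c / ‖c‖, 0, by simp [norm_ne_zero_iff.mpr hc], fun i => ?_⟩
  simp only [ofShapeSize, hw', rescale_smul _ hc, add_zero]
  cases i using Fin.cases <;> simp

lemma se2Rel_ofShapeSize_of_diffFromFirst {p : {p : Fin (m + 2) → ℂ // ¬ TotallyCoincidental p}}
    {w : {v : Fin (m + 1) → ℂ // v ≠ 0}} {r : {r : ℝ // 0 < r}} (hw : diffFromFirst p.1 = w.1)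
    (hr : ‖w.1‖ = r.1) : SE2Rel (m + 2) (ofShapeSize (w, r)) p :=
  ⟨1, p.1 0, norm_one, fun i => by
    simp [ofShapeSize, ← hr, rescale_norm_self, ← hw, cons_zero_diffFromFirst]⟩

lemma toShapeSize_ofShapeSize (w : {v : Fin (m + 1) → ℂ // v ≠ 0}) (r : {r : ℝ // 0 < r}) :
    toShapeSize (ofShapeSize (w, r)) = (Quot.mk _ w, r) := by
  refine Prod.ext (Quot.sound ?_).symm (Subtype.ext ?_)
  · exact ⟨_, Complex.ofReal_ne_zero.mpr (div_ne_zero r.2.ne' (norm_ne_zero_iff.mpr w.2)),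
      by simp [ofShapeSize, rescale]⟩
  · simpa [toShapeSize, ofShapeSize] using norm_rescale r.2.le w.2

variable (m) in
def shapeSizeEquiv : Quot (SE2Rel (m + 2)) ≃ Quot (CProjRel m) × {r : ℝ // 0 < r} where
  toFun := Quot.lift toShapeSize fun _ _ => toShapeSize_eq_of_se2Rel
  invFun x := Quot.lift (fun w => Quot.mk _ (ofShapeSize (w, x.2)))
    (fun _ _ h => Quot.sound (se2Rel_ofShapeSize h x.2)) x.1
  left_inv := Quot.ind fun _ => Quot.sound (se2Rel_ofShapeSize_of_diffFromFirst rfl rfl)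
  right_inv := by
    rintro ⟨w, r⟩
    induction w using Quot.ind
    exact toShapeSize_ofShapeSize _ r

lemma continuous_shapeSizeEquiv : Continuous (shapeSizeEquiv m) := by
  refine continuous_quot_lift (f := toShapeSize) _ (Continuous.prodMk ?_ ?_)
  · exact continuous_quot_mk.comp
      ((continuous_diffFromFirst.comp continuous_subtype_val).subtype_mk _)
  · exact (continuous_diffFromFirst.comp continuous_subtype_val).norm.subtype_mk _

lemma continuous_shapeSizeEquiv_symm : Continuous (shapeSizeEquiv m).symm := by
  have hq : IsOpenQuotientMap (Prod.map (Quot.mk (CProjRel m)) (id : {r : ℝ // 0 < r} → _)) :=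
    isOpenQuotientMap_quot_mk_smul.prodMap .id
  rw [hq.isQuotientMap.continuous_iff]
  refine continuous_quot_mk.comp (Continuous.subtype_mk ?_ _)
  exact continuous_const.finCons <| continuousOn_rescale.comp_continuous
    (f := fun x : {v : Fin (m + 1) → ℂ // v ≠ 0} × {r : ℝ // 0 < r} => (x.2.1, x.1.1))
    (by fun_prop) fun x => x.1.2

end ShapeSize

end

end PlanarConfiguration

open PlanarConfiguration in
/-- The space `Eⁿ` of equivalence classes under `SE(2)` of non-totally-coincidental
configurations of `n` labelled points in the plane is homeomorphic to
`ℂP(n-2) × (0, ∞)`. -/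
theorem stmt_1 (n : ℕ) (hn : 2 ≤ n) :
    Nonempty (Quot (SE2Rel n) ≃ₜ (Quot (CProjRel (n - 2)) × {r : ℝ // 0 < r})) := by
  obtain ⟨m, rfl⟩ := Nat.exists_eq_add_of_le' hn
  exact ⟨⟨shapeSizeEquiv m, continuous_shapeSizeEquiv, continuous_shapeSizeEquiv_symm⟩⟩
end

section
/- Every set of positive edge lengths (d₁,…,d₅) realizable by the 2-cycles graph satisfies the six inequalities d₃ ≤ d₁+d₂, d₁ ≤ d₂+d₃, d₂ ≤ d₁+d₃, d₃ ≤ d₄+d₅, d₄ ≤ d₃+d₅, d₅ ≤ d₃+d₄, and conversely any (d₁,…,d₅) ∈ ℝ₊⁵ satisfying these inequalities is realized by some configuration (x₁,x₂,x₃,x₄) ∈ (ℝ²)⁴. -/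
/-!
The six inequalities are the triangle inequalities of the two triangles `x₁x₂x₃` and `x₁x₃x₄`,
which share the edge `x₁x₃`. Conversely, put `x₁ = 0` and `x₃ = d₃` on the real axis; each
triangle can then be erected on this common base, and the two apexes chosen independently.
-/

open Complex

lemma norm_add_mul_I_eq {x y r : ℝ} (hr : 0 ≤ r) (h : x ^ 2 + y ^ 2 = r ^ 2) :
    ‖(x + y * I : ℂ)‖ = r := by
  rw [norm_add_mul_I, h, Real.sqrt_sq hr]

theorem exists_norm_eq_and_norm_sub_eq {a b c : ℝ}
    (hc : c ≤ a + b) (ha : a ≤ b + c) (hb : b ≤ a + c) :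
    ∃ z : ℂ, ‖z‖ = a ∧ ‖(c : ℂ) - z‖ = b := by
  have ha₀ : 0 ≤ a := by linarith
  have hb₀ : 0 ≤ b := by linarith
  rcases (show 0 ≤ c by linarith).eq_or_lt with rfl | hc₀
  · exact ⟨a, by simp [ha₀], by simp [abs_of_nonneg ha₀]; linarith⟩
  -- `x` is the foot of the altitude from `z`, `y` its height
  obtain ⟨x, hx⟩ : ∃ x : ℝ, 2 * c * x = a ^ 2 + c ^ 2 - b ^ 2 :=
    ⟨_, mul_div_cancel₀ _ (by positivity)⟩
  have hxa : 0 ≤ a ^ 2 - x ^ 2 := by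
    have heron : (2 * c) ^ 2 * (a ^ 2 - x ^ 2)
        = (a + c - b) * (a + c + b) * ((b - a + c) * (b + a - c)) := by
      linear_combination (-(2 * c * x + (a ^ 2 + c ^ 2 - b ^ 2))) * hx
    refine nonneg_of_mul_nonneg_right ?_ (by positivity : (0 : ℝ) < (2 * c) ^ 2)
    rw [heron]
    exact mul_nonneg (mul_nonneg (by linarith) (by linarith))
      (mul_nonneg (by linarith) (by linarith))
  set y := √(a ^ 2 - x ^ 2)
  have hy : y ^ 2 = a ^ 2 - x ^ 2 := Real.sq_sqrt hxa
  refine ⟨x + y * I, norm_add_mul_I_eq ha₀ (by linarith), ?_⟩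
  have hsub : (c : ℂ) - (x + y * I) = ↑(c - x) + ↑(-y) * I := by push_cast; ring
  rw [hsub]
  exact norm_add_mul_I_eq hb₀ (by linear_combination hy - hx)

theorem stmt_11_general (d₁ d₂ d₃ d₄ d₅ : ℝ) :
    (∃ x₁ x₂ x₃ x₄ : ℂ,
      ‖x₂ - x₁‖ = d₁ ∧ ‖x₃ - x₂‖ = d₂ ∧
      ‖x₁ - x₃‖ = d₃ ∧ ‖x₄ - x₃‖ = d₄ ∧
      ‖x₄ - x₁‖ = d₅) ↔
    (d₃ ≤ d₁ + d₂ ∧ d₁ ≤ d₂ + d₃ ∧ d₂ ≤ d₁ + d₃ ∧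
     d₃ ≤ d₄ + d₅ ∧ d₄ ≤ d₃ + d₅ ∧ d₅ ≤ d₃ + d₄) := by
  constructor
  · rintro ⟨x₁, x₂, x₃, x₄, rfl, rfl, rfl, rfl, rfl⟩
    simp only [← dist_eq_norm]
    exact ⟨by simpa [dist_comm, add_comm] using dist_triangle x₁ x₂ x₃,
      by simpa [dist_comm, add_comm] using dist_triangle x₂ x₃ x₁,
      by simpa [dist_comm, add_comm] using dist_triangle x₃ x₁ x₂,
      by simpa [dist_comm, add_comm] using dist_triangle x₁ x₄ x₃,
      by simpa [dist_comm, add_comm] using dist_triangle x₄ x₁ x₃,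
      by simpa [dist_comm, add_comm] using dist_triangle x₄ x₃ x₁⟩
  · rintro ⟨h₃, h₁, h₂, h₃', h₄, h₅⟩
    obtain ⟨z, hz₁, hz₂⟩ := exists_norm_eq_and_norm_sub_eq h₃ h₁ h₂
    obtain ⟨w, hw₅, hw₄⟩ := exists_norm_eq_and_norm_sub_eq (a := d₅) (b := d₄) (c := d₃)
      (by linarith) (by linarith) (by linarith)
    refine ⟨0, z, d₃, w, by simpa using hz₁, hz₂, ?_, by rwa [norm_sub_rev], by simpa using hw₅⟩
    simp only [zero_sub, norm_neg, norm_real, Real.norm_eq_abs]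
    exact abs_of_nonneg (by linarith)

/-- A quintuple of nonnegative edge lengths is realizable by the 2-cycles graph on
four vertices (edges `x₁x₂, x₂x₃, x₃x₁, x₃x₄, x₄x₁`) if and only if it satisfies
the six polygon inequalities. -/
theorem stmt_11 (d₁ d₂ d₃ d₄ d₅ : ℝ)
    (h₁ : 0 ≤ d₁) (h₂ : 0 ≤ d₂) (h₃ : 0 ≤ d₃) (h₄ : 0 ≤ d₄) (h₅ : 0 ≤ d₅) :
    (∃ x₁ x₂ x₃ x₄ : ℂ,
      ‖x₂ - x₁‖ = d₁ ∧ ‖x₃ - x₂‖ = d₂ ∧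
      ‖x₁ - x₃‖ = d₃ ∧ ‖x₄ - x₃‖ = d₄ ∧
      ‖x₄ - x₁‖ = d₅) ↔
    (d₃ ≤ d₁ + d₂ ∧ d₁ ≤ d₂ + d₃ ∧ d₂ ≤ d₁ + d₃ ∧
     d₃ ≤ d₄ + d₅ ∧ d₄ ≤ d₃ + d₅ ∧ d₅ ≤ d₃ + d₄) :=
  stmt_11_general d₁ d₂ d₃ d₄ d₅
end

section
/- For a leaderless directed graph G (every vertex has outvalence at least 1) with n vertices and m edges, there exists a matrix K ∈ ℝ^{n×m} of rank n such that the edge-adjacency matrix factors as A_e = A_m K, where A_m is the mixed-adjacency matrix. -/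
open Matrix

/-- The mixed-adjacency matrix of a directed graph with `n` vertices and `m`
ordered edges, where edge `i` goes from `src i` to `tgt i`: entry `(i,j)` is `-1`
if edge `i` originates at vertex `j`, `+1` if it ends at vertex `j`, `0`
otherwise. -/
def mixedAdjacency {n m : ℕ} (src tgt : Fin m → Fin n) : Matrix (Fin m) (Fin n) ℝ :=
  fun i j => if src i = j then -1 else if tgt i = j then 1 else 0

/-- The edge-adjacency matrix: entry `(i,j)` is `-1` if edges `i` and `j`
originate from the same vertex, `+1` if edge `i` ends at the vertex where edge
`j` starts, and `0` otherwise. -/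
def edgeAdjacency {n m : ℕ} (src tgt : Fin m → Fin n) : Matrix (Fin m) (Fin m) ℝ :=
  fun i j => if src i = src j then -1 else if tgt i = src j then 1 else 0

/-
Take `K v j := [src j = v]`, i.e. the identity matrix with its columns reindexed by `src`.
Then `(A_m K) i j = A_m i (src j)`, which is `A_e i j` entry by entry. Since the graph is
leaderless, `src` is surjective, and a section `g` of `src` gives the right inverse
`[j = g v]` of `K`, so `K` has full row rank `n`.
-/

namespace Matrix

variable {l m n R : Type*}

theorem mul_one_submatrix_id [Fintype n] [DecidableEq n] [NonAssocSemiring R]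
    (M : Matrix l n R) (f : m → n) :
    M * (1 : Matrix n n R).submatrix id f = M.submatrix id f := by
  simpa using mul_submatrix_one (Equiv.refl n) f M

theorem rank_one_submatrix_id_of_surjective [Fintype n] [Fintype m] [DecidableEq n]
    [DecidableEq m] [CommSemiring R] [StrongRankCondition R] {f : m → n}
    (hf : Function.Surjective f) :
    ((1 : Matrix n n R).submatrix id f).rank = Fintype.card n := by
  set K := (1 : Matrix n n R).submatrix id f
  have hK : K * (1 : Matrix m m R).submatrix id (Function.surjInv hf) = 1 := by
    rw [mul_one_submatrix_id, submatrix_submatrix, Function.comp_id, Function.comp_surjInv hf,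
      submatrix_id_id]
  refine le_antisymm (rank_le_card_height K) ?_
  calc Fintype.card n = (1 : Matrix n n R).rank := rank_one.symm
    _ ≤ K.rank := hK ▸ rank_mul_le_left _ _

end Matrix

theorem edgeAdjacency_eq_submatrix_mixedAdjacency {n m : ℕ} (src tgt : Fin m → Fin n) :
    edgeAdjacency src tgt = (mixedAdjacency src tgt).submatrix id src :=
  rfl

theorem stmt_14_general {n m : ℕ} (src tgt : Fin m → Fin n)
    (hleaderless : ∀ v : Fin n, ∃ i, src i = v) :
    ∃ K : Matrix (Fin n) (Fin m) ℝ, K.rank = n ∧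
      edgeAdjacency src tgt = mixedAdjacency src tgt * K := by
  refine ⟨(1 : Matrix (Fin n) (Fin n) ℝ).submatrix id src, ?_, ?_⟩
  · simpa using rank_one_submatrix_id_of_surjective (R := ℝ) hleaderless
  · rw [mul_one_submatrix_id, edgeAdjacency_eq_submatrix_mixedAdjacency]

/-- For a leaderless directed graph (every vertex is the origin of at least one
edge, with no self-loops), there is a matrix `K ∈ ℝ^{n×m}` of rank `n` with
`A_e = A_m K`. -/
theorem stmt_14 {n m : ℕ} (src tgt : Fin m → Fin n)
    (hloop : ∀ i, src i ≠ tgt i)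
    (hleaderless : ∀ v : Fin n, ∃ i, src i = v) :
    ∃ K : Matrix (Fin n) (Fin m) ℝ, K.rank = n ∧
      edgeAdjacency src tgt = mixedAdjacency src tgt * K :=
  stmt_14_general src tgt hleaderless
end

section
/- The rigidity matrix of the 2-cycles framework, R = Z A_m^{(2)} ∈ ℝ^{5×8}, has full row rank 5 whenever the edge lengths lie in the interior of the feasible set (equivalently, whenever all zᵢ ≠ 0 and the configuration satisfies the strict polygon inequalities), i.e. the 2-cycles framework is infinitesimally rigid for such configurations. -/
/-! The 5×5 minor of the rigidity matrix on the columns of `x₁`, `x₂` and the `j`-th column of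
`x₃` is `−(z₄)ⱼ · [z₁, z₂] · [z₃, z₅]`, where `[u, v] = u₀v₁ − u₁v₀`. The strict triangle
inequalities give `|⟪u, v⟫| < ‖u‖‖v‖` for both triangles, so by Lagrange's identity
`[u, v]² + ⟪u, v⟫² = ‖u‖²‖v‖²` neither bracket vanishes; and `‖z₄‖ > |‖z₃‖ − ‖z₅‖| ≥ 0`
supplies a `j` with `(z₄)ⱼ ≠ 0`. -/

open Matrix

/-- The rigidity matrix of the 2-cycles framework on `(x₁,x₂,x₃,x₄) ∈ (ℝ²)⁴`,
with `z₁ = x₂−x₁`, `z₂ = x₃−x₂`, `z₃ = x₁−x₃`, `z₄ = x₄−x₃`, `z₅ = x₄−x₁`: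
its rows are `(z₁,−z₁,0,0)`, `(0,z₂,−z₂,0)`, `(−z₃,0,z₃,0)`, `(0,0,z₄,−z₄)`,
`(z₅,0,0,−z₅)` read as row vectors in `(ℝ²)⁴ ≃ ℝ⁸`. -/
noncomputable def rigidityMatrix2Cycles (x : Fin 4 → EuclideanSpace ℝ (Fin 2)) :
    Matrix (Fin 5) (Fin 8) ℝ :=
  let z₁ := x 1 - x 0
  let z₂ := x 2 - x 1
  let z₃ := x 0 - x 2
  let z₄ := x 3 - x 2
  let z₅ := x 3 - x 0
  !![z₁ 0, z₁ 1, -z₁ 0, -z₁ 1, 0, 0, 0, 0;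
     0, 0, z₂ 0, z₂ 1, -z₂ 0, -z₂ 1, 0, 0;
     -z₃ 0, -z₃ 1, 0, 0, z₃ 0, z₃ 1, 0, 0;
     0, 0, 0, 0, z₄ 0, z₄ 1, -z₄ 0, -z₄ 1;
     z₅ 0, z₅ 1, 0, 0, 0, 0, -z₅ 0, -z₅ 1]

theorem Matrix.rank_eq_card_of_det_submatrix_ne_zero {m n K : Type*} [Fintype m] [Fintype n]
    [DecidableEq m] [Field K] (A : Matrix m n K) (c : m → n) (h : (A.submatrix id c).det ≠ 0) :
    A.rank = Fintype.card m := by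
  refine le_antisymm A.rank_le_card_height ?_
  have hc := A.rank_submatrix_le id c
  rwa [rank_of_isUnit _ ((isUnit_iff_isUnit_det _).mpr h.isUnit)] at hc

theorem abs_real_inner_lt_norm_mul_norm {F : Type*} [NormedAddCommGroup F] [InnerProductSpace ℝ F]
    {u v : F} (h₁ : ‖u + v‖ < ‖u‖ + ‖v‖) (h₂ : |‖u‖ - ‖v‖| < ‖u + v‖) :
    |inner ℝ u v| < ‖u‖ * ‖v‖ := by
  have hsq := norm_add_sq_real u v
  have h₁' : ‖u + v‖ ^ 2 < (‖u‖ + ‖v‖) ^ 2 := by gcongr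
  have h₂' : (‖u‖ - ‖v‖) ^ 2 < ‖u + v‖ ^ 2 := by
    rw [← sq_abs]; gcongr
  rw [abs_lt]; constructor <;> nlinarith

def cross2 (u v : EuclideanSpace ℝ (Fin 2)) : ℝ := u 0 * v 1 - u 1 * v 0

theorem cross2_sq_add_inner_sq (u v : EuclideanSpace ℝ (Fin 2)) :
    cross2 u v ^ 2 + inner ℝ u v ^ 2 = ‖u‖ ^ 2 * ‖v‖ ^ 2 := by
  simp only [cross2, EuclideanSpace.norm_sq_eq, EuclideanSpace.inner_eq_star_dotProduct, dotProduct,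
    Pi.star_apply, star_trivial, Fin.sum_univ_two, Real.norm_eq_abs, sq_abs]
  ring

theorem cross2_ne_zero_of_strict_triangle {u v : EuclideanSpace ℝ (Fin 2)}
    (h₁ : ‖u + v‖ < ‖u‖ + ‖v‖) (h₂ : |‖u‖ - ‖v‖| < ‖u + v‖) : cross2 u v ≠ 0 := by
  intro h
  have hlt := abs_real_inner_lt_norm_mul_norm h₁ h₂
  have hsq := cross2_sq_add_inner_sq u v
  have hlt_sq := sq_lt_sq' (abs_lt.mp hlt).1 (abs_lt.mp hlt).2
  rw [h] at hsq
  linarith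

theorem det_submatrix_rigidityMatrix2Cycles (x : Fin 4 → EuclideanSpace ℝ (Fin 2)) (j : Fin 2) :
    ((rigidityMatrix2Cycles x).submatrix id ![0, 1, 2, 3, ⟨4 + j, by omega⟩]).det =
      -((x 3 - x 2) j * cross2 (x 1 - x 0) (x 2 - x 1) * cross2 (x 0 - x 2) (x 3 - x 0)) := by
  fin_cases j <;>
  · simp [rigidityMatrix2Cycles, cross2, det_succ_row_zero, Fin.sum_univ_succ, Fin.succAbove]
    ring

theorem rank_rigidityMatrix2Cycles_eq_five {x : Fin 4 → EuclideanSpace ℝ (Fin 2)}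
    (hz₄ : x 3 - x 2 ≠ 0) (h₁ : cross2 (x 1 - x 0) (x 2 - x 1) ≠ 0)
    (h₂ : cross2 (x 0 - x 2) (x 3 - x 0) ≠ 0) : (rigidityMatrix2Cycles x).rank = 5 := by
  obtain ⟨j, hj⟩ : ∃ j, (x 3 - x 2) j ≠ 0 := by
    by_contra! h
    exact hz₄ (by ext j; simp [h j])
  apply rank_eq_card_of_det_submatrix_ne_zero _ ![0, 1, 2, 3, ⟨4 + j, by omega⟩]
  rw [det_submatrix_rigidityMatrix2Cycles]
  exact neg_ne_zero.mpr (mul_ne_zero (mul_ne_zero hj h₁) h₂)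

theorem stmt_15_general (x : Fin 4 → EuclideanSpace ℝ (Fin 2))
    (d : Fin 5 → ℝ)
    (hd₁ : d 0 = ‖x 1 - x 0‖) (hd₂ : d 1 = ‖x 2 - x 1‖)
    (hd₃ : d 2 = ‖x 0 - x 2‖) (hd₄ : d 3 = ‖x 3 - x 2‖)
    (hd₅ : d 4 = ‖x 3 - x 0‖)
    (ht₁ : d 2 < d 0 + d 1) (ht₂ : d 0 < d 1 + d 2) (ht₃ : d 1 < d 0 + d 2)
    (ht₄ : d 2 < d 3 + d 4) (ht₅ : d 3 < d 2 + d 4) (ht₆ : d 4 < d 2 + d 3) :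
    (rigidityMatrix2Cycles x).rank = 5 := by
  have hsum₁ : ‖x 1 - x 0 + (x 2 - x 1)‖ = d 2 := by
    rw [hd₃, ← norm_neg]; congr 1; abel
  have hsum₂ : ‖x 0 - x 2 + (x 3 - x 0)‖ = d 3 := by
    rw [hd₄]; congr 1; abel
  refine rank_rigidityMatrix2Cycles_eq_five ?_ ?_ ?_
  · exact norm_pos_iff.mp (by linarith)
  · apply cross2_ne_zero_of_strict_triangle
    · rw [hsum₁, ← hd₁, ← hd₂]; exact ht₁
    · rw [hsum₁, ← hd₁, ← hd₂, abs_sub_lt_iff]; constructor <;> linarith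
  · apply cross2_ne_zero_of_strict_triangle
    · rw [hsum₂, ← hd₃, ← hd₅]; exact ht₅
    · rw [hsum₂, ← hd₃, ← hd₅, abs_sub_lt_iff]; constructor <;> linarith

/-- The 2-cycles framework is infinitesimally rigid when the edge lengths lie in
the interior of the feasible set: if all the `zᵢ` are nonzero and the two triangle
inequalities hold strictly, the rigidity matrix has full row rank `5 = 2·4 − 3`. -/
theorem stmt_15 (x : Fin 4 → EuclideanSpace ℝ (Fin 2))
    (d : Fin 5 → ℝ)
    (hd₁ : d 0 = ‖x 1 - x 0‖) (hd₂ : d 1 = ‖x 2 - x 1‖)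
    (hd₃ : d 2 = ‖x 0 - x 2‖) (hd₄ : d 3 = ‖x 3 - x 2‖)
    (hd₅ : d 4 = ‖x 3 - x 0‖)
    (hpos : ∀ i, 0 < d i)
    (ht₁ : d 2 < d 0 + d 1) (ht₂ : d 0 < d 1 + d 2) (ht₃ : d 1 < d 0 + d 2)
    (ht₄ : d 2 < d 3 + d 4) (ht₅ : d 3 < d 2 + d 4) (ht₆ : d 4 < d 2 + d 3) :
    (rigidityMatrix2Cycles x).rank = 5 :=
  stmt_15_general x d hd₁ hd₂ hd₃ hd₄ hd₅ ht₁ ht₂ ht₃ ht₄ ht₅ ht₆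
end
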